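/- arXiv:math/0109013 — 13 statements merged into one kernel-verified Lean document; each statement's English description precedes it below -/
import Mathlib

section
/- The determinant of the n×n matrix with entries (i+j+s+t choose i+s) for 0 ≤ i,j < n equals the product over k from 0 to s-1 of (n+k+t choose t)/(k+t choose t). -/
/-!
Factor each entry as `C(a+t+j, a) = (a+t)!/a! · (a+t+1)^{(j)}/(j+t)!` with `a = i + s`, where
`x^{(j)}` is the rising factorial. Pulling the row and column factors out of the determinant
leaves the matrix `((x_i)^{(j)})` with nodes `x_i = i + s + t + 1`; since `x^{(j)}` is monic of
degree `j`, this has the Vandermonde determinant `∏_{i<n} i!`. Regrouped by rows, the product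
is `∏_{i<n} h(i+s)/h(i)` with `h(m) = C(m+t, t)`, which telescopes to `∏_{k<s} h(n+k)/h(k)`.
-/

open Finset Nat

theorem Finset.prod_range_shift_div_comm {K : Type*} [Field K] (h : ℕ → K)
    (hh : ∀ m, h m ≠ 0) (n s : ℕ) :
    ∏ i ∈ range n, h (i + s) / h i = ∏ k ∈ range s, h (n + k) / h k := by
  have hprod : ∀ m, ∏ i ∈ range m, h i ≠ 0 := fun m => prod_ne_zero_iff.2 fun i _ => hh i
  rw [prod_div_distrib, prod_div_distrib, div_eq_div_iff (hprod n) (hprod s)]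
  simp only [add_comm _ s]
  rw [mul_comm, ← prod_range_add, mul_comm, ← prod_range_add, add_comm]

theorem Matrix.det_ascPochhammer_eval {R : Type*} [CommRing R] [IsDomain R] {n : ℕ}
    (v : Fin n → R) :
    (Matrix.of fun i j : Fin n => (ascPochhammer R j).eval (v i)).det =
      (Matrix.vandermonde v).det :=
  (det_eval_matrixOfPolynomials_eq_det_vandermonde v _
    (fun j => ascPochhammer_natDegree R j) (fun j => monic_ascPochhammer R j)).symm

theorem Matrix.det_vandermonde_add_natCast {R : Type*} [CommRing R] (n : ℕ) (c : R) :
    (Matrix.vandermonde fun i : Fin n => (i : R) + c).det = ∏ i ∈ range n, (i ! : R) := by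
  rw [Matrix.det_vandermonde_add]
  cases n with
  | zero => simp
  | succ m =>
    rw [Matrix.det_vandermonde_id_eq_superFactorial m, ← Nat.prod_range_succ_factorial m]
    push_cast
    rfl

theorem Nat.cast_choose_eq_mul_ascFactorial {K : Type*} [Field K] [CharZero K] (a b c : ℕ) :
    ((a + b + c).choose a : K) =
      (a + b)! / a ! * ((a + b + 1).ascFactorial c / (b + c)!) := by
  rw [Nat.cast_choose K (by omega : a ≤ a + b + c), show a + b + c - a = b + c by omega,
    ← factorial_mul_ascFactorial]
  push_cast
  field_simp

theorem stmt_0 (s t n : ℕ) :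
    (Matrix.of fun i j : Fin n =>
      (((i : ℕ) + j + s + t).choose ((i : ℕ) + s) : ℚ)).det =
    ∏ k ∈ Finset.range s,
      (((n + k + t).choose t : ℚ) / ((k + t).choose t : ℚ)) := by
  have hM : (Matrix.of fun i j : Fin n => (((i : ℕ) + j + s + t).choose ((i : ℕ) + s) : ℚ)) =
      Matrix.of fun i j : Fin n => (((i : ℕ) + s + t)! / ((i : ℕ) + s)! : ℚ) *
        (Matrix.of fun i j : Fin n => (1 / ((j : ℕ) + t)! : ℚ) *
          (Matrix.of fun i j : Fin n => (ascPochhammer ℚ j).eval ((i : ℚ) + (s + t + 1))) i j) i j := by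
    ext i j
    simp only [Matrix.of_apply]
    rw [show (i : ℕ) + j + s + t = (i + s) + t + j by ring, cast_choose_eq_mul_ascFactorial,
      cast_ascFactorial, add_comm t (j : ℕ)]
    push_cast
    ring_nf
  have hrow : ∀ i : ℕ, ((i + s + t)! / (i + s)! : ℚ) * (1 / (i + t)!) * i ! =
      ((i + s + t).choose t : ℚ) / (i + t).choose t := by
    intro i
    rw [Nat.cast_choose ℚ (by omega : t ≤ i + s + t), Nat.cast_choose ℚ (by omega : t ≤ i + t),
      show i + s + t - t = i + s by omega, show i + t - t = i by omega]
    field_simp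
  rw [hM, Matrix.det_mul_column, Matrix.det_mul_row, Matrix.det_ascPochhammer_eval,
    Matrix.det_vandermonde_add_natCast,
    Fin.prod_univ_eq_prod_range (fun i => ((i + s + t)! / (i + s)! : ℚ)),
    Fin.prod_univ_eq_prod_range (fun j => (1 / (j + t)! : ℚ)), ← mul_assoc, ← prod_mul_distrib,
    ← prod_mul_distrib]
  simp_rw [hrow]
  exact prod_range_shift_div_comm (fun m => ((m + t).choose t : ℚ))
    (fun m => by exact_mod_cast (Nat.choose_pos (by omega)).ne') n s
end

section
/- The determinant of the n×n matrix with entries (i+j+k)! for 0 ≤ i,j < n equals the product over i from 0 to n-1 of i!·(i+k)!. -/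
/-!
Since `(i + j + k)! = (i + k)! · j! · C(i + j + k, j)`, the matrix factors as
`diag((i + k)!) · P · diag(j!)` with `P i j = C(i + j + k, j)`. By Vandermonde's identity,
`C(i + j + k, j) = ∑ₗ C(i, l) · C(j + k, k + l)`, so `P` is the product of a lower and an upper
unitriangular matrix and has determinant `1`.
-/

open Finset Matrix
open scoped Nat

theorem Nat.choose_add_add_eq_sum_range {i j k n : ℕ} (hj : j < n) :
    (i + j + k).choose j = ∑ l ∈ range n, i.choose l * (j + k).choose (k + l) := by
  calc (i + j + k).choose j
      = ∑ l ∈ range (j + 1), i.choose l * (j + k).choose (j - l) := by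
        rw [add_assoc, Nat.add_choose_eq, Nat.sum_antidiagonal_eq_sum_range_succ_mk]
    _ = ∑ l ∈ range (j + 1), i.choose l * (j + k).choose (k + l) :=
        sum_congr rfl fun l hl => by
          have := mem_range.1 hl
          rw [Nat.choose_symm_of_eq_add (a := j - l) (b := k + l) (by omega)]
    _ = ∑ l ∈ range n, i.choose l * (j + k).choose (k + l) :=
        sum_subset (range_subset_range.2 hj) fun l _ hl => by
          have := mem_range.not.1 hl
          rw [Nat.choose_eq_zero_of_lt (n := j + k) (by omega), mul_zero]

section

variable {R : Type*} [CommRing R] {n : ℕ}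

theorem Matrix.of_choose_add_add_eq_mul (k : ℕ) :
    (of fun i j : Fin n => ((i + j + k : ℕ).choose j : R)) =
      (of fun i l : Fin n => ((i : ℕ).choose l : R)) *
        of fun l j : Fin n => ((j + k : ℕ).choose (k + l) : R) := by
  ext i j
  rw [mul_apply, of_apply, Nat.choose_add_add_eq_sum_range j.2, Nat.cast_sum]
  simp only [of_apply, Nat.cast_mul]
  exact (Fin.sum_univ_eq_sum_range
    (fun l => ((i : ℕ).choose l * (j + k : ℕ).choose (k + l) : R)) n).symm

theorem Matrix.det_of_choose_add_add (k : ℕ) :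
    (of fun i j : Fin n => ((i + j + k : ℕ).choose j : R)).det = 1 := by
  have hL : (of fun i l : Fin n => ((i : ℕ).choose l : R)).IsLowerTriangular :=
    fun i l hil => by simp [Nat.choose_eq_zero_of_lt (show (i : ℕ) < l from hil)]
  have hU : (of fun l j : Fin n => ((j + k : ℕ).choose (k + l) : R)).IsUpperTriangular :=
    fun l j (hjl : j < l) => by
      simp [Nat.choose_eq_zero_of_lt (show j + k < k + (l : ℕ) by omega)]
  rw [of_choose_add_add_eq_mul, det_mul, det_of_isLowerTriangular _ hL,
    det_of_isUpperTriangular hU]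
  simp [add_comm k]

theorem Matrix.of_factorial_add_add_eq (k : ℕ) :
    (of fun i j : Fin n => ((i + j + k : ℕ)! : R)) =
      diagonal (fun i : Fin n => ((i + k : ℕ)! : R)) *
        (of fun i j : Fin n => ((i + j + k : ℕ).choose j : R)) *
          diagonal fun j : Fin n => ((j : ℕ)! : R) := by
  ext i j
  have h := Nat.add_choose_mul_factorial_mul_factorial ((i : ℕ) + k) j
  rw [show (i : ℕ) + k + j = i + j + k by ring] at h
  simp only [of_apply, mul_diagonal, diagonal_mul, ← h, Nat.cast_mul]
  ring

end

theorem stmt_1 (k n : ℕ) :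
    (Matrix.of fun i j : Fin n =>
      ((Nat.factorial ((i : ℕ) + j + k) : ℤ))).det =
    ∏ i ∈ Finset.range n,
      (Nat.factorial i : ℤ) * (Nat.factorial (i + k) : ℤ) := by
  rw [of_factorial_add_add_eq, det_mul, det_mul, det_of_choose_add_add, det_diagonal,
    det_diagonal, mul_one, ← prod_mul_distrib,
    Fin.prod_univ_eq_prod_range (fun i => ((i + k)! : ℤ) * (i ! : ℤ))]
  exact prod_congr rfl fun i _ => mul_comm _ _
end

section
/- Let A(n) be the n×n matrix defined recursively by a_{i,j} = a_{i-1,j} + a_{i,j-1} + α_i·β_j with the convention a_{i,-1} = a_{-1,j} = 0. Then the entry a_{i,j} equals the double sum ∑_{s=0}^{i} ∑_{t=0}^{j} α_{i-s}·β_{j-t}·C(s+t, s). -/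
/-- Entries of the matrix defined by `a_{i,j} = a_{i-1,j} + a_{i,j-1} + α_i β_j`
with the convention that entries with index `-1` are `0`. -/
def aRec {R : Type*} [CommRing R] (α β : ℕ → R) : ℕ → ℕ → R
  | 0, 0 => α 0 * β 0
  | i + 1, 0 => aRec α β i 0 + α (i + 1) * β 0
  | 0, j + 1 => aRec α β 0 j + α 0 * β (j + 1)
  | i + 1, j + 1 => aRec α β i (j + 1) + aRec α β (i + 1) j + α (i + 1) * β (j + 1)

/-! The closed form is the convolution of the source term `α_i β_j` with the kernel
`C(s + t, s)`. Splitting off the boundary terms `s = 0` and `t = 0` and applying Pascal's rule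
to the rest shows that this convolution satisfies the same recursion as `a_{i,j}`. -/

open Finset Finset.Nat

theorem Nat.choose_add_succ_succ (s t : ℕ) :
    (s + 1 + (t + 1)).choose (s + 1) = (s + (t + 1)).choose s + (s + 1 + t).choose (s + 1) := by
  rw [show s + 1 + (t + 1) = s + (t + 1) + 1 by omega, Nat.choose_succ_succ',
    show s + (t + 1) = s + 1 + t by omega]

section PascalConv

variable {R : Type*} [NonAssocSemiring R] (f : ℕ → ℕ → R)

/-- Summing over antidiagonals `(s, i - s)` keeps truncated subtraction out of the recursion. -/
def pascalConv (i j : ℕ) : R :=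
  ∑ x ∈ antidiagonal i, ∑ y ∈ antidiagonal j, ((x.1 + y.1).choose x.1 : R) * f x.2 y.2

theorem pascalConv_zero_zero : pascalConv f 0 0 = f 0 0 := by
  simp [pascalConv]

theorem pascalConv_zero_succ (j : ℕ) :
    pascalConv f 0 (j + 1) = pascalConv f 0 j + f 0 (j + 1) := by
  simp [pascalConv, sum_antidiagonal_succ, add_comm]

theorem pascalConv_succ_zero (i : ℕ) :
    pascalConv f (i + 1) 0 = pascalConv f i 0 + f (i + 1) 0 := by
  simp [pascalConv, sum_antidiagonal_succ, add_comm]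

theorem pascalConv_succ_succ (i j : ℕ) :
    pascalConv f (i + 1) (j + 1) =
      pascalConv f i (j + 1) + pascalConv f (i + 1) j + f (i + 1) (j + 1) := by
  simp only [pascalConv, sum_antidiagonal_succ, Nat.choose_zero_right, Nat.choose_self,
    Nat.choose_add_succ_succ, Nat.cast_one, Nat.cast_add, one_mul, add_mul, zero_add, add_zero,
    sum_add_distrib]
  abel

end PascalConv

theorem aRec_eq_pascalConv {R : Type*} [CommRing R] (α β : ℕ → R) (i j : ℕ) :
    aRec α β i j = pascalConv (fun p q => α p * β q) i j := by
  induction i generalizing j with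
  | zero =>
    induction j with
    | zero => rw [pascalConv_zero_zero, aRec]
    | succ j ih => rw [pascalConv_zero_succ, aRec, ih]
  | succ i ihi =>
    induction j with
    | zero => rw [pascalConv_succ_zero, aRec, ihi]
    | succ j ihj => rw [pascalConv_succ_succ, aRec, ihi, ihj]

theorem stmt_5 {R : Type*} [CommRing R] (α β : ℕ → R) (i j : ℕ) :
    aRec α β i j =
      ∑ s ∈ Finset.range (i + 1), ∑ t ∈ Finset.range (j + 1),
        α (i - s) * β (j - t) * ((s + t).choose s : R) := by
  rw [aRec_eq_pascalConv, pascalConv, sum_antidiagonal_eq_sum_range_succ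
    (fun s r => ∑ y ∈ antidiagonal j, ((s + y.1).choose s : R) * (α r * β y.2))]
  refine sum_congr rfl fun s _ => ?_
  rw [sum_antidiagonal_eq_sum_range_succ (fun t q => ((s + t).choose s : R) * (α (i - s) * β q))]
  exact sum_congr rfl fun t _ => mul_comm _ _
end

section
/- Let A(n) be the n×n matrix defined recursively by a_{i,j} = a_{i-1,j} + a_{i,j-1} + α_i·β_j (with a_{i,-1} = a_{-1,j} = 0). Then det(A(n)) = (α_0·β_0)^n. -/
open Finset Matrix

section

variable {R : Type*} [CommRing R]

/-- Multiplication of the coefficient sequence of a polynomial by `1 + X`, followed by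
adding `a` to the constant term. -/
def pascalStep (a : R) (f : ℕ → R) : ℕ → R
  | 0 => f 0 + a
  | k + 1 => f (k + 1) + f k

/-- `pascalFactor α i k = ∑_{p ≤ i} α_p * (i - p).choose k`. -/
def pascalFactor (α : ℕ → R) : ℕ → ℕ → R
  | 0 => pascalStep (α 0) 0
  | i + 1 => pascalStep (α (i + 1)) (pascalFactor α i)

/-- The shift part of `pascalStep` preserves the pairing `∑_k f_k g_k` (as `f` vanishes at the
end of the range), and the constant terms contribute `a * b`. -/
theorem sum_pascalStep_mul_pascalStep (a b : R) (f g : ℕ → R) {N : ℕ} (hf : f N = 0) :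
    ∑ k ∈ range (N + 1), pascalStep a f k * pascalStep b g k =
      ∑ k ∈ range (N + 1), f k * pascalStep b g k +
        ∑ k ∈ range (N + 1), pascalStep a f k * g k + a * b := by
  have shift : ∑ k ∈ range (N + 1), f k * g k = ∑ k ∈ range N, f (k + 1) * g (k + 1) + f 0 * g 0 :=
    sum_range_succ' _ _
  have drop_last : ∑ k ∈ range (N + 1), f k * g k = ∑ k ∈ range N, f k * g k := by
    simp [sum_range_succ, hf]
  simp only [sum_range_succ', pascalStep, add_mul, mul_add, sum_add_distrib]
  linear_combination shift - drop_last

theorem pascalFactor_eq_zero_of_lt (α : ℕ → R) {i k : ℕ} (h : i < k) : pascalFactor α i k = 0 := by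
  induction i generalizing k with
  | zero => cases k with
    | zero => omega
    | succ k => simp [pascalFactor, pascalStep]
  | succ i ih => cases k with
    | zero => omega
    | succ k => simp [pascalFactor, pascalStep, ih (by omega : i < k + 1), ih (by omega : i < k)]

theorem pascalFactor_self (α : ℕ → R) (i : ℕ) : pascalFactor α i i = α 0 := by
  cases i with
  | zero => simp [pascalFactor, pascalStep]
  | succ i =>
    simp [pascalFactor, pascalStep, pascalFactor_eq_zero_of_lt α (Nat.lt_succ_self i),
      pascalFactor_self α i]

theorem det_pascalFactor (α : ℕ → R) (n : ℕ) :
    (of fun i k : Fin n => pascalFactor α i k).det = α 0 ^ n := by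
  have lower : (of fun i k : Fin n => pascalFactor α i k).IsLowerTriangular :=
    fun i k h => pascalFactor_eq_zero_of_lt α (by exact_mod_cast h)
  simp [det_of_isLowerTriangular _ lower, pascalFactor_self]

theorem sum_pascalFactor_mul_pascalFactor (α β : ℕ → R) {i j N : ℕ} (hi : i < N) (hj : j < N) :
    ∑ k ∈ range N, pascalFactor α i k * pascalFactor β j k = aRec α β i j := by
  obtain ⟨M, rfl⟩ : ∃ M, N = M + 1 := ⟨N - 1, by omega⟩
  replace hi : i ≤ M := by omega
  replace hj : j ≤ M := by omega
  fun_induction aRec α β i j with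
  | case1 => simp [pascalFactor, sum_pascalStep_mul_pascalStep]
  | case2 i ih =>
    rw [← ih (by omega) hj]
    simp [pascalFactor, sum_pascalStep_mul_pascalStep _ _ _ _ (pascalFactor_eq_zero_of_lt α hi)]
  | case3 j ih =>
    rw [← ih hi (by omega)]
    simp [pascalFactor, sum_pascalStep_mul_pascalStep]
  | case4 i j ih1 ih2 =>
    rw [← ih1 (by omega) hj, ← ih2 hi (by omega)]
    simp [pascalFactor, sum_pascalStep_mul_pascalStep _ _ _ _ (pascalFactor_eq_zero_of_lt α hi)]

end

theorem stmt_6 {R : Type*} [CommRing R] (α β : ℕ → R) (n : ℕ) :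
    (Matrix.of fun i j : Fin n => aRec α β i j).det = (α 0 * β 0) ^ n := by
  have factor : (of fun i j : Fin n => aRec α β i j) =
      (of fun i k : Fin n => pascalFactor α i k) * (of fun j k : Fin n => pascalFactor β j k)ᵀ := by
    ext i j
    simp only [mul_apply, transpose_apply, of_apply, Fin.sum_univ_eq_sum_range
      (fun k => pascalFactor α i k * pascalFactor β j k)]
    exact (sum_pascalFactor_mul_pascalFactor α β i.2 j.2).symm
  rw [factor, det_mul, det_transpose, det_pascalFactor, det_pascalFactor, mul_pow]
end

section
/- Let P be the generalized Pascal matrix with first column α, first row β (where α_0 = β_0 = γ_0), and interior entries p_{i,j} = p_{i-1,j} + p_{i,j-1}. Then p_{i,j} = γ_0·C(i+j,i) + ∑_{s=1}^{i} (α_s − α_{s-1})·C(i−s+j, j) + ∑_{t=1}^{j} (β_t − β_{t-1})·C(i+j−t, i). -/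
/-- Entries of the generalized Pascal triangle with first column `α`, first row `β`
and the Pascal recursion rule in the interior. -/
def pascalRec {R : Type*} [CommRing R] (α β : ℕ → R) : ℕ → ℕ → R
  | i, 0 => α i
  | 0, j + 1 => β (j + 1)
  | i + 1, j + 1 => pascalRec α β i (j + 1) + pascalRec α β (i + 1) j

/-!
Both sides of the identity obey Pascal's rule in the interior and agree on the first row and
column, so they coincide. Pascal's rule is linear, and it holds for `(i, j) ↦ C(i+j, i)` and for
each sum `∑ₛ aₛ C(i-s+j, j)`; the third sum is the second one with the roles of `i` and `j`
exchanged. On the boundary the binomial coefficients are `1` and the sums telescope.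
-/

open Finset

section PascalRule

variable {R : Type*} [CommRing R]

def IsPascal (f : ℕ → ℕ → R) : Prop :=
  ∀ i j, f (i + 1) (j + 1) = f i (j + 1) + f (i + 1) j

theorem pascalRec_eq_of_isPascal {α β : ℕ → R} {f : ℕ → ℕ → R} (hf : IsPascal f)
    (hcol : ∀ i, f i 0 = α i) (hrow : ∀ j, f 0 (j + 1) = β (j + 1)) (i j : ℕ) :
    pascalRec α β i j = f i j := by
  induction i, j using pascalRec.induct with
  | case1 i => rw [pascalRec, hcol]
  | case2 j => rw [pascalRec, hrow]
  | case3 i j ih₁ ih₂ => rw [pascalRec, ih₁, ih₂, hf]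

theorem IsPascal.add {f g : ℕ → ℕ → R} (hf : IsPascal f) (hg : IsPascal g) :
    IsPascal fun i j => f i j + g i j := by
  intro i j
  dsimp only
  rw [hf, hg, add_add_add_comm]

theorem IsPascal.const_mul {f : ℕ → ℕ → R} (hf : IsPascal f) (c : R) :
    IsPascal fun i j => c * f i j := by
  intro i j
  dsimp only
  rw [hf, mul_add]

theorem IsPascal.swap {f : ℕ → ℕ → R} (hf : IsPascal f) : IsPascal fun i j => f j i := by
  intro i j
  dsimp only
  rw [hf, add_comm]

theorem isPascal_choose_add : IsPascal fun i j => ((i + j).choose i : R) := by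
  intro i j
  dsimp only
  rw [show i + 1 + (j + 1) = i + j + 1 + 1 by omega, Nat.choose_succ_succ',
    show i + (j + 1) = i + j + 1 by omega, show i + 1 + j = i + j + 1 by omega]
  push_cast
  rfl

theorem isPascal_sum_Icc_mul_choose (a : ℕ → R) :
    IsPascal fun i j => ∑ s ∈ Icc 1 i, a s * ((i - s + j).choose j : R) := by
  intro i j
  simp only [sum_Icc_succ_top (Nat.le_add_left 1 i), Nat.sub_self, zero_add, Nat.choose_self]
  rw [← add_assoc, ← sum_add_distrib]
  congr 1
  refine sum_congr rfl fun s hs => ?_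
  have hsi : s ≤ i := (mem_Icc.mp hs).2
  rw [show i + 1 - s + (j + 1) = i - s + j + 1 + 1 by omega, Nat.choose_succ_succ',
    show i - s + (j + 1) = i - s + j + 1 by omega, show i + 1 - s + j = i - s + j + 1 by omega]
  push_cast
  ring

theorem isPascal_sum_Icc_mul_choose_add_sub (a : ℕ → R) :
    IsPascal fun i j => ∑ t ∈ Icc 1 j, a t * ((i + j - t).choose i : R) := by
  have hreindex : (fun i j => ∑ t ∈ Icc 1 j, a t * ((i + j - t).choose i : R)) =
      fun i j => ∑ t ∈ Icc 1 j, a t * ((j - t + i).choose i : R) := by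
    funext i j
    refine sum_congr rfl fun t ht => ?_
    rw [show i + j - t = j - t + i by grind]
  rw [hreindex]
  exact (isPascal_sum_Icc_mul_choose a).swap

end PascalRule

theorem sum_Icc_one_sub_pred {M : Type*} [AddCommGroup M] (f : ℕ → M) (n : ℕ) :
    ∑ s ∈ Icc 1 n, (f s - f (s - 1)) = f n - f 0 := by
  induction n with
  | zero => simp
  | succ n ih =>
    rw [sum_Icc_succ_top (Nat.le_add_left 1 n), ih, Nat.add_sub_cancel, sub_add_sub_cancel']

theorem stmt_7 {R : Type*} [CommRing R] (α β : ℕ → R) (γ₀ : R)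
    (hα : α 0 = γ₀) (hβ : β 0 = γ₀) (i j : ℕ) :
    pascalRec α β i j =
      γ₀ * ((i + j).choose i : R) +
      (∑ s ∈ Finset.Icc 1 i, (α s - α (s - 1)) * ((i - s + j).choose j : R)) +
      (∑ t ∈ Finset.Icc 1 j, (β t - β (t - 1)) * ((i + j - t).choose i : R)) := by
  have hF := ((isPascal_choose_add.const_mul γ₀).add
    (isPascal_sum_Icc_mul_choose fun s => α s - α (s - 1))).add
    (isPascal_sum_Icc_mul_choose_add_sub fun t => β t - β (t - 1))
  refine pascalRec_eq_of_isPascal hF (fun i => ?_) (fun j => ?_) i j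
  · simp only [add_zero, Nat.choose_self, Nat.choose_zero_right, Nat.cast_one, mul_one,
      sum_Icc_one_sub_pred, hα, Icc_eq_empty_of_lt zero_lt_one, sum_empty, add_sub_cancel]
  · simp only [zero_add, add_zero, Nat.choose_zero_right, Nat.cast_one, mul_one,
      sum_Icc_one_sub_pred, hβ, Icc_eq_empty_of_lt zero_lt_one, sum_empty, add_sub_cancel]
end

section
/- Let α be any sequence with α_0 = 1 and let β be the constant sequence (1,1,1,…). Then the generalized Pascal matrix P_{α,β}(n) has determinant 1 for all n ≥ 1. -/
namespace Matrix

variable {R : Type*} [CommRing R]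

theorem det_succ_of_row_zero_succ_eq_zero {n : ℕ} (A : Matrix (Fin (n + 1)) (Fin (n + 1)) R)
    (h : ∀ j : Fin n, A 0 j.succ = 0) : A.det = A 0 0 * (A.submatrix Fin.succ Fin.succ).det := by
  rw [det_succ_row_zero, Fin.sum_univ_succ]
  simp [h]

end Matrix

namespace pascalRec

variable {R : Type*} [CommRing R]

theorem zero_left {α β : ℕ → R} (h : α 0 = β 0) : ∀ j, pascalRec α β 0 j = β j
  | 0 => by rw [pascalRec, h]
  | j + 1 => by rw [pascalRec]

theorem succ_sub_succ_left (α β : ℕ → R) (i j : ℕ) :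
    pascalRec α β (i + 1) (j + 1) - pascalRec α β (i + 1) j = pascalRec α β i (j + 1) := by
  rw [pascalRec, add_sub_cancel_right]

theorem shift_col (α β : ℕ → R) (i j : ℕ) :
    pascalRec (fun k => pascalRec α β k 1) (fun k => β (k + 1)) i j
      = pascalRec α β i (j + 1) := by
  induction i generalizing j with
  | zero => cases j <;> simp only [pascalRec]
  | succ i ih =>
    induction j with
    | zero => rw [pascalRec]
    | succ j ihj => rw [pascalRec, ih, ihj, ← pascalRec]

theorem det_const_one (n : ℕ) (α : ℕ → R) (hα : α 0 = 1) :
    (Matrix.of fun i j : Fin n => pascalRec α (fun _ => 1) i j).det = 1 := by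
  induction n generalizing α with
  | zero => exact Matrix.det_fin_zero
  | succ n ih =>
    set P : ℕ → ℕ → R := pascalRec α (fun _ => 1)
    let D : Matrix (Fin (n + 1)) (Fin (n + 1)) R :=
      Matrix.of fun i j => Fin.cases (α i) (fun j : Fin n => P i (j + 1) - P i j) j
    have hcol : (Matrix.of fun i j : Fin (n + 1) => P i j).det = D.det :=
      Matrix.det_eq_of_forall_col_eq_smul_add_pred (fun _ => 1)
        (fun i => by simp [D, P, pascalRec]) (fun i j => by simp [D])
    have hrow : ∀ j : Fin n, D 0 j.succ = 0 := fun j => by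
      simp [D, P, zero_left (β := fun _ => (1 : R)) hα]
    have hblock : D.submatrix Fin.succ Fin.succ
        = Matrix.of fun i j : Fin n => pascalRec (fun k => P k 1) (fun _ => 1) i j := by
      ext i j
      simp [D, P, succ_sub_succ_left, shift_col α (fun _ => (1 : R))]
    rw [hcol, D.det_succ_of_row_zero_succ_eq_zero hrow, hblock, ih _ (zero_left hα 1)]
    simpa [D] using hα

end pascalRec

theorem stmt_8_general {R : Type*} [CommRing R] (α : ℕ → R) (hα : α 0 = 1) (n : ℕ) :
    (Matrix.of fun i j : Fin n => pascalRec α (fun _ => 1) i j).det = 1 :=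
  pascalRec.det_const_one n α hα

theorem stmt_8 {R : Type*} [CommRing R] (α : ℕ → R) (hα : α 0 = 1) (n : ℕ) (hn : 1 ≤ n) :
    (Matrix.of fun i j : Fin n => pascalRec α (fun _ => 1) i j).det = 1 :=
  stmt_8_general α hα n
end

section
/- Let α = (1, A, A², …, A^k, …) and β = (1, B, B², …, B^k, …) be geometric sequences. Then the determinant of the generalized Pascal matrix P_{α,β}(n) equals (A + B − A·B)^{n−1} for all n ≥ 1. -/
open Matrix

section PascalRec

variable {R : Type*} [CommRing R] (α β : ℕ → R)

@[simp]
theorem pascalRec_zero_right (i : ℕ) : pascalRec α β i 0 = α i := by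
  rw [pascalRec]

theorem pascalRec_succ_succ (i j : ℕ) :
    pascalRec α β (i + 1) (j + 1) = pascalRec α β i (j + 1) + pascalRec α β (i + 1) j := by
  rw [pascalRec]

theorem pascalRec_zero_left (h : α 0 = β 0) (j : ℕ) : pascalRec α β 0 j = β j := by
  cases j
  · rw [pascalRec, h]
  · rw [pascalRec]

end PascalRec

theorem pascal_ext {M : Type*} [Add M] {f g : ℕ → ℕ → M}
    (hf : ∀ i j, f (i + 1) (j + 1) = f i (j + 1) + f (i + 1) j)
    (hg : ∀ i j, g (i + 1) (j + 1) = g i (j + 1) + g (i + 1) j)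
    (hcol : ∀ i, f i 0 = g i 0) (hrow : ∀ j, f 0 j = g 0 j) : f = g := by
  funext i j
  induction i generalizing j with
  | zero => exact hrow j
  | succ i ih =>
    induction j with
    | zero => exact hcol _
    | succ j ihj => rw [hf, hg, ih, ihj]

section Geometric

variable {R : Type*} [CommRing R] (A B : R)

local notation "P" => pascalRec (fun k => A ^ k) (fun k => B ^ k)

theorem geomPascal_zero_left (j : ℕ) : P 0 j = B ^ j :=
  pascalRec_zero_left _ _ (by simp) j

theorem geomPascal_sub_mul_col_one (i : ℕ) : P (i + 1) 1 - A * P i 1 = A + B - A * B := by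
  induction i with
  | zero => simp [pascalRec_succ_succ, geomPascal_zero_left]; ring
  | succ i ih =>
    rw [pascalRec_succ_succ _ _ (i + 1), pascalRec_succ_succ _ _ i] at *
    simp only [pascalRec_zero_right] at *
    linear_combination ih

theorem geomPascal_sub_mul_row_one (j : ℕ) : P 1 (j + 1) - B * P 1 j = A + B - A * B := by
  induction j with
  | zero => simp [pascalRec_succ_succ, geomPascal_zero_left]; ring
  | succ j ih =>
    rw [pascalRec_succ_succ _ _ 0 (j + 1), pascalRec_succ_succ _ _ 0 j] at *
    simp only [geomPascal_zero_left] at *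
    linear_combination ih

theorem geomPascal_second_difference (i j : ℕ) :
    P (i + 1) (j + 1) - A * P i (j + 1) - B * P (i + 1) j + A * B * P i j =
      (A + B - A * B) * pascalRec (fun k => (1 : R) ^ k) (fun k => 1 ^ k) i j := by
  have key := pascal_ext
    (f := fun i j => P (i + 1) (j + 1) - A * P i (j + 1) - B * P (i + 1) j + A * B * P i j)
    (g := fun i j => (A + B - A * B) * pascalRec (fun k => (1 : R) ^ k) (fun k => 1 ^ k) i j)
    (fun i j => by simp only [pascalRec_succ_succ]; ring)
    (fun i j => by simp only [pascalRec_succ_succ]; ring)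
    (fun i => by
      simp only [pascalRec_zero_right]
      linear_combination geomPascal_sub_mul_col_one A B i)
    (fun j => by
      simp only [geomPascal_zero_left]
      linear_combination geomPascal_sub_mul_row_one A B j)
  exact congrFun (congrFun key i) j

end Geometric

section Bidiagonal

variable {R : Type*} [CommRing R]

def unitLowerBidiagonal (a : R) (n : ℕ) : Matrix (Fin (n + 1)) (Fin (n + 1)) R :=
  Matrix.of fun i k => if i = k then 1 else if (k : ℕ) + 1 = i then -a else 0

theorem det_unitLowerBidiagonal (a : R) (n : ℕ) : (unitLowerBidiagonal a n).det = 1 := by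
  rw [det_of_isLowerTriangular _ fun i k (hik : i < k) => ?_]
  · simp [unitLowerBidiagonal]
  · have : ¬ (k : ℕ) + 1 = i := by omega
    simp [unitLowerBidiagonal, hik.ne, this]

variable {n : ℕ} (M : Matrix (Fin (n + 1)) (Fin (n + 1)) R)

theorem unitLowerBidiagonal_mul_apply_zero (a : R) (j : Fin (n + 1)) :
    (unitLowerBidiagonal a n * M) 0 j = M 0 j := by
  simp [unitLowerBidiagonal, mul_apply]

theorem unitLowerBidiagonal_mul_apply_succ (a : R) (i : Fin n) (j : Fin (n + 1)) :
    (unitLowerBidiagonal a n * M) i.succ j = M i.succ j - a * M i.castSucc j := by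
  have hsub (k : Fin (n + 1)) : (k : ℕ) + 1 = i.succ ↔ k = i.castSucc := by
    simp [Fin.ext_iff]
  have hne : i.succ ≠ i.castSucc := Fin.castSucc_lt_succ.ne'
  simp only [unitLowerBidiagonal, mul_apply, of_apply, hsub]
  rw [Fintype.sum_eq_add i.succ i.castSucc hne fun k hk => by simp [Ne.symm hk.1, hk.2]]
  simp [hne]
  ring

theorem mul_unitLowerBidiagonal_transpose_apply_zero (b : R) (i : Fin (n + 1)) :
    (M * (unitLowerBidiagonal b n)ᵀ) i 0 = M i 0 := by
  rw [← transpose_transpose M, ← transpose_mul, transpose_apply,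
    unitLowerBidiagonal_mul_apply_zero]
  rfl

theorem mul_unitLowerBidiagonal_transpose_apply_succ (b : R) (i : Fin (n + 1)) (j : Fin n) :
    (M * (unitLowerBidiagonal b n)ᵀ) i j.succ = M i j.succ - b * M i j.castSucc := by
  rw [← transpose_transpose M, ← transpose_mul, transpose_apply,
    unitLowerBidiagonal_mul_apply_succ]
  rfl

theorem det_eq_mul_det_submatrix_succ_of_row_zero (h : ∀ j : Fin n, M 0 j.succ = 0) :
    M.det = M 0 0 * (M.submatrix Fin.succ Fin.succ).det := by
  rw [det_succ_row_zero, Fin.sum_univ_succ]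
  simp [h]

end Bidiagonal

section GeomPascalMatrix

variable {R : Type*} [CommRing R]

def geomPascalMatrix (A B : R) (n : ℕ) : Matrix (Fin n) (Fin n) R :=
  Matrix.of fun i j => pascalRec (fun k => A ^ k) (fun k => B ^ k) i j

theorem det_geomPascalMatrix_succ (A B : R) (m : ℕ) :
    (geomPascalMatrix A B (m + 1)).det = (A + B - A * B) ^ m * (geomPascalMatrix 1 1 m).det := by
  set E := unitLowerBidiagonal A m * geomPascalMatrix A B (m + 1) * (unitLowerBidiagonal B m)ᵀ
  have hdet : E.det = (geomPascalMatrix A B (m + 1)).det := by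
    simp [E, det_unitLowerBidiagonal]
  have h00 : E 0 0 = 1 := by
    simp [E, mul_unitLowerBidiagonal_transpose_apply_zero, unitLowerBidiagonal_mul_apply_zero,
      geomPascalMatrix]
  have hrow (j : Fin m) : E 0 j.succ = 0 := by
    simp [E, mul_unitLowerBidiagonal_transpose_apply_succ, unitLowerBidiagonal_mul_apply_zero,
      geomPascalMatrix, geomPascal_zero_left, pow_succ']
  have hsub : E.submatrix Fin.succ Fin.succ = (A + B - A * B) • geomPascalMatrix 1 1 m := by
    ext i j
    rw [Matrix.smul_apply, smul_eq_mul]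
    simp only [E, submatrix_apply, mul_unitLowerBidiagonal_transpose_apply_succ,
      unitLowerBidiagonal_mul_apply_succ, geomPascalMatrix, of_apply, Fin.val_succ,
      Fin.val_castSucc]
    linear_combination geomPascal_second_difference A B i j
  rw [← hdet, det_eq_mul_det_submatrix_succ_of_row_zero E hrow, h00, hsub, det_smul,
    Fintype.card_fin, one_mul]

theorem det_geomPascalMatrix_one_one (m : ℕ) : (geomPascalMatrix (1 : R) 1 m).det = 1 := by
  induction m with
  | zero => exact det_isEmpty
  | succ m ih => rw [det_geomPascalMatrix_succ, ih]; ring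

end GeomPascalMatrix

theorem stmt_10_general {R : Type*} [CommRing R] (A B : R) (n : ℕ) :
    (Matrix.of fun i j : Fin n =>
      pascalRec (fun k => A ^ k) (fun k => B ^ k) i j).det = (A + B - A * B) ^ (n - 1) := by
  cases n with
  | zero => simp
  | succ m =>
    rw [Nat.add_sub_cancel]
    exact (det_geomPascalMatrix_succ A B m).trans (by rw [det_geomPascalMatrix_one_one, mul_one])

theorem stmt_10 {R : Type*} [CommRing R] (A B : R) (n : ℕ) (hn : 1 ≤ n) :
    (Matrix.of fun i j : Fin n =>
      pascalRec (fun k => A ^ k) (fun k => B ^ k) i j).det = (A + B - A * B) ^ (n - 1) :=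
  stmt_10_general A B n
end

section
/- Let d(n) = det(M(n)) where M(n) is the generalized Pascal matrix whose first column and first row both satisfy order-2 linear recursions with coefficients (A_1, A_2) and (B_1, B_2) respectively. Then d(1) = γ_0, d(2) = γ_0(α_1 + β_1) − α_1β_1, and d(n) = D_1·d(n−1) + D_2·d(n−2) for n ≥ 3, where D_1 = −(A_1β_1 + B_1α_1 − 2(α_1+β_1) + γ_0(A_1B_2 + A_2B_1 − (A_2+B_2) + A_2B_2)) and D_2 = −(A_2γ_0 + α_1 + (1−A_1−A_2)β_1)·(B_2γ_0 + β_1 + (1−B_1−B_2)α_1). -/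
open Finset fwdDiff

namespace GeneralizedPascal

def kerMat {M : Type*} (K : ℕ → ℕ → M) (n : ℕ) : Matrix (Fin n) (Fin n) M :=
  Matrix.of fun i j => K i j

@[simp]
lemma kerMat_apply {M : Type*} (K : ℕ → ℕ → M) {n : ℕ} (i j : Fin n) : kerMat K n i j = K i j :=
  rfl

lemma kerMat_submatrix_castSucc {M : Type*} (K : ℕ → ℕ → M) (n : ℕ) :
    (kerMat K (n + 1)).submatrix Fin.castSucc Fin.castSucc = kerMat K n :=
  rfl

def toeplitzKernel {M : Type*} (t : ℤ → M) (k l : ℕ) : M :=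
  t (l - k)

lemma toeplitzKernel_add_one_add_one {M : Type*} (t : ℤ → M) (k l : ℕ) :
    toeplitzKernel t (k + 1) (l + 1) = toeplitzKernel t k l := by
  simp only [toeplitzKernel, Nat.cast_succ, add_sub_add_right_eq_sub]

lemma toeplitzKernel_swap {M : Type*} (t : ℤ → M) :
    (fun k l => toeplitzKernel t l k) = toeplitzKernel fun z => t (-z) := by
  funext k l
  simp only [toeplitzKernel, neg_sub]

-- The value at `0` is taken from `u`; `v 0` is never used.
def twoSided {M : Type*} (u v : ℕ → M) : ℤ → M
  | Int.ofNat n => u n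
  | Int.negSucc n => v (n + 1)

lemma twoSided_neg_natCast {M : Type*} {u v : ℕ → M} (h : u 0 = v 0) (n : ℕ) :
    twoSided u v (-n) = v n := by
  cases n with
  | zero => exact h
  | succ n => rfl

variable {R : Type*} [CommRing R]

section LowerTriangular

variable {L L' : ℕ → ℕ → R}

lemma sum_fin_mul_of_lower (hL : ∀ i k, i < k → L i k = 0) {n : ℕ} (i : Fin n) (g : ℕ → R) :
    ∑ k : Fin n, L i k * g k = ∑ k ∈ range (i + 1), L i k * g k := by
  rw [Fin.sum_univ_eq_sum_range (fun k => L i k * g k)]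
  refine (sum_subset (range_subset_range.mpr i.isLt) fun k _ hk => ?_).symm
  rw [hL i k (by simpa using hk), zero_mul]

lemma det_kerMat_of_unipotent (hL : ∀ i k, i < k → L i k = 0) (hL1 : ∀ i, L i i = 1) (n : ℕ) :
    (kerMat L n).det = 1 := by
  rw [Matrix.det_of_isLowerTriangular (kerMat L n) fun i k (hik : i < k) => hL i k hik]
  simp [hL1]

lemma sum_unipotent_mul_of_eq_zero (hL1 : ∀ i, L i i = 1) {f : ℕ → R} {i : ℕ}
    (hf : ∀ k < i, f k = 0) : ∑ k ∈ range (i + 1), L i k * f k = f i := by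
  rw [sum_range_succ, sum_eq_zero fun k hk => by rw [hf k (mem_range.mp hk), mul_zero], hL1,
    zero_add, one_mul]

def conjKernel (L L' K : ℕ → ℕ → R) (i j : ℕ) : R :=
  ∑ k ∈ range (i + 1), L i k * ∑ l ∈ range (j + 1), L' j l * K k l

lemma conjKernel_comm (L L' K : ℕ → ℕ → R) (i j : ℕ) :
    conjKernel L L' K i j = conjKernel L' L (fun k l => K l k) j i := by
  simp only [conjKernel, mul_sum]
  rw [sum_comm]
  simp only [mul_left_comm]

lemma kerMat_conjKernel (hL : ∀ i k, i < k → L i k = 0) (hL' : ∀ i k, i < k → L' i k = 0)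
    (K : ℕ → ℕ → R) (n : ℕ) :
    kerMat (conjKernel L L' K) n = kerMat L n * kerMat K n * (kerMat L' n).transpose := by
  ext i j
  rw [Matrix.mul_assoc]
  simp only [Matrix.mul_apply, kerMat_apply, Matrix.transpose_apply, conjKernel]
  rw [sum_fin_mul_of_lower hL i fun k => ∑ l : Fin n, K k l * L' j l]
  refine sum_congr rfl fun k _ => ?_
  simp only [mul_comm (K k _)]
  rw [sum_fin_mul_of_lower hL' j (K k)]

lemma det_kerMat_conjKernel (hL : ∀ i k, i < k → L i k = 0) (hL1 : ∀ i, L i i = 1)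
    (hL' : ∀ i k, i < k → L' i k = 0) (hL'1 : ∀ i, L' i i = 1) (K : ℕ → ℕ → R) (n : ℕ) :
    (kerMat (conjKernel L L' K) n).det = (kerMat K n).det := by
  rw [kerMat_conjKernel hL hL', Matrix.det_mul, Matrix.det_mul, Matrix.det_transpose,
    det_kerMat_of_unipotent hL hL1, det_kerMat_of_unipotent hL' hL'1, one_mul, mul_one]

end LowerTriangular

section Tridiagonal

lemma det_kerMat_succ_of_eq_zero (H : ℕ → ℕ → R) {n : ℕ} (hH : ∀ i < n, H i n = 0) :
    (kerMat H (n + 1)).det = H n n * (kerMat H n).det := by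
  rw [Matrix.det_succ_column _ (Fin.last n), Fin.sum_univ_castSucc,
    sum_eq_zero fun i _ => by simp [hH i i.isLt], Fin.succAbove_last, kerMat_submatrix_castSucc]
  simp

lemma det_kerMat_add_two_of_tridiagonal (G : ℕ → ℕ → R)
    (hG : ∀ i j, i + 2 ≤ j ∨ j + 2 ≤ i → G i j = 0) (n : ℕ) :
    (kerMat G (n + 2)).det =
      G (n + 1) (n + 1) * (kerMat G (n + 1)).det -
        G n (n + 1) * G (n + 1) n * (kerMat G n).det := by
  have hminor : (kerMat G (n + 2)).submatrix (Fin.last (n + 1)).succAbove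
      (Fin.last n).castSucc.succAbove =
        kerMat (fun i j => G i (if j < n then j else j + 1)) (n + 1) := by
    ext i j
    simp only [kerMat_apply, Matrix.submatrix_apply, Fin.succAbove_last]
    congr 1
    rcases lt_or_ge (j : ℕ) n with hj | hj
    · rw [Fin.succAbove_of_castSucc_lt _ _ (by simpa [Fin.lt_def] using hj), if_pos hj]; rfl
    · rw [Fin.succAbove_of_le_castSucc _ _ (by simpa [Fin.le_def] using hj), if_neg (by omega)]
      rfl
  have hsmall : kerMat (fun i j => G i (if j < n then j else j + 1)) n = kerMat G n := by
    ext i j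
    simp
  have hodd : (-1 : R) ^ (n + 1 + n) = -1 := Odd.neg_one_pow ⟨n, by ring⟩
  have heven : (-1 : R) ^ (n + 1 + (n + 1)) = 1 := Even.neg_one_pow ⟨n + 1, rfl⟩
  rw [Matrix.det_succ_row _ (Fin.last (n + 1)), Fin.sum_univ_castSucc, Fin.sum_univ_castSucc,
    sum_eq_zero fun j _ => by simp [hG (n + 1) j (by omega)], hminor,
    det_kerMat_succ_of_eq_zero _ fun i hi => by simp [hG i (n + 1) (by omega)], hsmall,
    Fin.succAbove_last, kerMat_submatrix_castSucc]
  simp only [Fin.val_last, Fin.val_castSucc, lt_irrefl, if_false, hodd, heven, kerMat_apply]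
  ring

end Tridiagonal

section Pascal

lemma pascalRec_unique {α β : ℕ → R} (Z : ℕ → ℕ → R) (hcol : ∀ i, Z i 0 = α i)
    (hrow : ∀ j, Z 0 (j + 1) = β (j + 1))
    (hZ : ∀ i j, Z (i + 1) (j + 1) = Z i (j + 1) + Z (i + 1) j) : pascalRec α β = Z := by
  funext i j
  induction i generalizing j with
  | zero =>
    cases j with
    | zero => rw [pascalRec, hcol]
    | succ j => rw [pascalRec, hrow]
  | succ i ih =>
    induction j with
    | zero => rw [pascalRec, hcol]
    | succ j ihj => rw [pascalRec, ih, ihj, hZ]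

def chooseKernel (i k : ℕ) : R :=
  i.choose k

lemma chooseKernel_of_lt {i k : ℕ} (h : i < k) : (chooseKernel i k : R) = 0 := by
  simp [chooseKernel, Nat.choose_eq_zero_of_lt h]

lemma chooseKernel_self (i : ℕ) : (chooseKernel i i : R) = 1 := by
  simp [chooseKernel]

lemma sum_range_choose_succ_mul (f : ℕ → R) (n : ℕ) :
    ∑ k ∈ range (n + 2), ((n + 1).choose k : R) * f k =
      ∑ k ∈ range (n + 1), (n.choose k : R) * f k +
        ∑ k ∈ range (n + 1), (n.choose k : R) * f (k + 1) :=
  sum_choose_succ_mul (fun k _ => f k) n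

lemma conjKernel_choose_add_one_add_one {K : ℕ → ℕ → R} (hK : ∀ k l, K (k + 1) (l + 1) = K k l)
    (i j : ℕ) :
    conjKernel chooseKernel chooseKernel K (i + 1) (j + 1) =
      conjKernel chooseKernel chooseKernel K i (j + 1) +
        conjKernel chooseKernel chooseKernel K (i + 1) j := by
  set W : ℕ → ℕ → R := fun k j => ∑ l ∈ range (j + 1), (j.choose l : R) * K k l
  have hW : ∀ k, W (k + 1) (j + 1) = W (k + 1) j + W k j := fun k => by
    simp only [W, sum_range_choose_succ_mul, hK]
  change ∑ k ∈ range (i + 2), ((i + 1).choose k : R) * W k (j + 1) =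
    ∑ k ∈ range (i + 1), (i.choose k : R) * W k (j + 1) +
      ∑ k ∈ range (i + 2), ((i + 1).choose k : R) * W k j
  simp only [sum_range_choose_succ_mul, hW, mul_add, sum_add_distrib]
  ring

lemma pascalRec_eq_conjKernel {α β : ℕ → R} (t : ℤ → R)
    (hα : ∀ i, α i = ∑ k ∈ range (i + 1), (i.choose k : R) * t (-k))
    (hβ : ∀ j, β j = ∑ l ∈ range (j + 1), (j.choose l : R) * t l) :
    pascalRec α β = conjKernel chooseKernel chooseKernel (toeplitzKernel t) := by
  refine pascalRec_unique _ (fun i => ?_) (fun j => ?_)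
    (conjKernel_choose_add_one_add_one (toeplitzKernel_add_one_add_one t))
  · simp [conjKernel, chooseKernel, toeplitzKernel, hα]
  · simp [conjKernel, chooseKernel, toeplitzKernel, hβ]

end Pascal

section Differences

lemma eq_sum_choose_mul_fwdDiff_iter (f : ℕ → R) (n : ℕ) :
    f n = ∑ k ∈ range (n + 1), (n.choose k : R) * Δ_[1] ^[k] f 0 := by
  simpa [nsmul_eq_mul] using shift_eq_sum_fwdDiff_iter 1 f n 0

lemma fwdDiff_iter_add_two_apply {a b : R} {f : ℕ → R}
    (hf : ∀ n, f (n + 2) = a * f (n + 1) + b * f n) (k x : ℕ) :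
    Δ_[1] ^[k + 2] f x = (a - 2) * Δ_[1] ^[k + 1] f x + (a + b - 1) * Δ_[1] ^[k] f x := by
  have h2 : Δ_[1] ^[2] f = (a - 2) • Δ_[1] f + (a + b - 1) • f := by
    funext n
    simp only [Function.iterate_succ, Function.iterate_zero, Function.comp_apply, id, fwdDiff,
      Pi.add_apply, Pi.smul_apply, smul_eq_mul, add_assoc, hf]
    ring
  rw [Function.iterate_add_apply, h2, fwdDiff_iter_add, fwdDiff_iter_const_smul,
    fwdDiff_iter_const_smul, Function.iterate_succ_apply]
  rfl

def diffSymbol (α β : ℕ → R) : ℤ → R :=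
  twoSided (fun k => Δ_[1] ^[k] β 0) (fun k => Δ_[1] ^[k] α 0)

section Values

variable (α β : ℕ → R)

lemma diffSymbol_zero : diffSymbol α β 0 = β 0 := rfl

lemma diffSymbol_one : diffSymbol α β 1 = β 1 - β 0 := rfl

lemma diffSymbol_two : diffSymbol α β 2 = β 2 - 2 * β 1 + β 0 := by
  change β 2 - β 1 - (β 1 - β 0) = _
  ring

lemma diffSymbol_neg_one : diffSymbol α β (-1) = α 1 - α 0 := rfl

lemma diffSymbol_neg_two : diffSymbol α β (-2) = α 2 - 2 * α 1 + α 0 := by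
  change α 2 - α 1 - (α 1 - α 0) = _
  ring

end Values

lemma diffSymbol_natCast_add_two {α β : ℕ → R} {a b : R}
    (hβ : ∀ n, β (n + 2) = a * β (n + 1) + b * β n) (m : ℕ) :
    diffSymbol α β (m + 2) = (a - 2) * diffSymbol α β (m + 1) + (a + b - 1) * diffSymbol α β m :=
  fwdDiff_iter_add_two_apply hβ m 0

lemma diffSymbol_neg_natCast {α β : ℕ → R} (h0 : α 0 = β 0) (m : ℕ) :
    diffSymbol α β (-m) = Δ_[1] ^[m] α 0 :=
  twoSided_neg_natCast (u := fun k => Δ_[1] ^[k] β 0) (v := fun k => Δ_[1] ^[k] α 0) h0.symm m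

lemma diffSymbol_neg_natCast_add_two {α β : ℕ → R} {a b : R} (h0 : α 0 = β 0)
    (hα : ∀ n, α (n + 2) = a * α (n + 1) + b * α n) (m : ℕ) :
    diffSymbol α β (-(m + 2)) =
      (a - 2) * diffSymbol α β (-(m + 1)) + (a + b - 1) * diffSymbol α β (-m) := by
  rw [show -((m : ℤ) + 2) = -((m + 2 : ℕ) : ℤ) by push_cast; rfl,
    show -((m : ℤ) + 1) = -((m + 1 : ℕ) : ℤ) by push_cast; rfl, diffSymbol_neg_natCast h0,
    diffSymbol_neg_natCast h0, diffSymbol_neg_natCast h0]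
  exact fwdDiff_iter_add_two_apply hα m 0

lemma pascalRec_eq_conjKernel_diffSymbol {α β : ℕ → R} (h0 : α 0 = β 0) :
    pascalRec α β = conjKernel chooseKernel chooseKernel (toeplitzKernel (diffSymbol α β)) :=
  pascalRec_eq_conjKernel _
    (fun i => by simp only [diffSymbol_neg_natCast h0]; exact eq_sum_choose_mul_fwdDiff_iter α i)
    (fun j => eq_sum_choose_mul_fwdDiff_iter β j)

end Differences

section Band

-- The kernel of the lower-triangular Toeplitz matrix `1 - p S - q S²` (`S` the down shift),
-- which annihilates, from its third row on, columns satisfying `x (k + 2) = p x (k + 1) + q x k`.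
def recKernel (p q : R) (i k : ℕ) : R :=
  if k = i then 1 else if k + 1 = i then -p else if k + 2 = i then -q else 0

variable (p q : R)

lemma recKernel_self (i : ℕ) : recKernel p q i i = 1 :=
  if_pos rfl

lemma recKernel_of_lt {i k : ℕ} (h : i < k) : recKernel p q i k = 0 := by
  rw [recKernel, if_neg (by omega), if_neg (by omega), if_neg (by omega)]

lemma sum_recKernel_mul (f : ℕ → R) (i : ℕ) :
    ∑ k ∈ range (i + 2 + 1), recKernel p q (i + 2) k * f k =
      f (i + 2) - p * f (i + 1) - q * f i := by
  rw [sum_range_succ, sum_range_succ, sum_range_succ,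
    sum_eq_zero fun k hk => by
      rw [recKernel, if_neg, if_neg, if_neg, zero_mul] <;> rw [mem_range] at hk <;> omega]
  simp only [recKernel, Nat.left_eq_add, OfNat.ofNat_ne_zero, ↓reduceIte, Nat.add_left_cancel_iff,
    OfNat.one_ne_ofNat, neg_mul, zero_add, one_mul]
  ring

variable {p q} {p' q' : R} {t : ℤ → R}

lemma sum_recKernel_toeplitzKernel_eq_zero (ht : ∀ m : ℕ, t (m + 2) = p * t (m + 1) + q * t m)
    {j k : ℕ} (h : k + 2 ≤ j) :
    ∑ l ∈ range (j + 1), recKernel p q j l * toeplitzKernel t k l = 0 := by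
  obtain ⟨m, rfl⟩ : ∃ m, j = k + m + 2 := ⟨j - k - 2, by omega⟩
  rw [sum_recKernel_mul]
  simp only [toeplitzKernel, Nat.cast_add, Nat.cast_ofNat, Nat.cast_one]
  rw [show (k : ℤ) + m + 2 - k = m + 2 by ring, show (k : ℤ) + m + 1 - k = m + 1 by ring,
    show (k : ℤ) + m - k = m by ring, ht]
  ring

def bandKernel (p q p' q' : R) (t : ℤ → R) : ℕ → ℕ → R :=
  conjKernel (recKernel p q) (recKernel p' q') (toeplitzKernel t)

lemma bandKernel_comm (i j : ℕ) :
    bandKernel p q p' q' t i j = bandKernel p' q' p q (fun z => t (-z)) j i := by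
  rw [bandKernel, conjKernel_comm, toeplitzKernel_swap, bandKernel]

lemma bandKernel_of_add_two_le (ht : ∀ m : ℕ, t (m + 2) = p' * t (m + 1) + q' * t m)
    {i j : ℕ} (h : i + 2 ≤ j) : bandKernel p q p' q' t i j = 0 := by
  rw [bandKernel, conjKernel]
  refine sum_eq_zero fun k hk => ?_
  rw [sum_recKernel_toeplitzKernel_eq_zero ht (by rw [mem_range] at hk; omega), mul_zero]

lemma bandKernel_eq_zero (ht : ∀ m : ℕ, t (m + 2) = p' * t (m + 1) + q' * t m)
    (ht' : ∀ m : ℕ, t (-(m + 2)) = p * t (-(m + 1)) + q * t (-m)) {i j : ℕ}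
    (h : i + 2 ≤ j ∨ j + 2 ≤ i) : bandKernel p q p' q' t i j = 0 := by
  rcases h with h | h
  · exact bandKernel_of_add_two_le ht h
  · rw [bandKernel_comm]
    exact bandKernel_of_add_two_le ht' h

lemma bandKernel_add_one_add_two (ht : ∀ m : ℕ, t (m + 2) = p' * t (m + 1) + q' * t m) (i : ℕ) :
    bandKernel p q p' q' t (i + 1) (i + 2) = t 1 - p' * t 0 - q' * t (-1) := by
  rw [bandKernel, conjKernel, sum_unipotent_mul_of_eq_zero (recKernel_self p q)
    fun k hk => sum_recKernel_toeplitzKernel_eq_zero ht (by omega), sum_recKernel_mul]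
  simp only [toeplitzKernel, Nat.cast_add, Nat.cast_ofNat, Nat.cast_one]
  rw [show (i : ℤ) + 2 - (i + 1) = 1 by ring, show (i : ℤ) + 1 - (i + 1) = 0 by ring,
    show (i : ℤ) - (i + 1) = -1 by ring]

lemma bandKernel_add_two_add_one (ht' : ∀ m : ℕ, t (-(m + 2)) = p * t (-(m + 1)) + q * t (-m))
    (i : ℕ) : bandKernel p q p' q' t (i + 2) (i + 1) = t (-1) - p * t 0 - q * t 1 := by
  rw [bandKernel_comm, bandKernel_add_one_add_two ht', neg_zero, neg_neg]

lemma bandKernel_add_two_add_two (i : ℕ) :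
    bandKernel p q p' q' t (i + 2) (i + 2) =
      t 0 - p' * t (-1) - q' * t (-2) - p * (t 1 - p' * t 0 - q' * t (-1)) -
        q * (t 2 - p' * t 1 - q' * t 0) := by
  rw [bandKernel, conjKernel, sum_recKernel_mul, sum_recKernel_mul, sum_recKernel_mul,
    sum_recKernel_mul]
  simp only [toeplitzKernel, Nat.cast_add, Nat.cast_ofNat, Nat.cast_one]
  ring_nf

lemma det_kerMat_pascalRec {α β : ℕ → R} (h0 : α 0 = β 0) (p q p' q' : R) (n : ℕ) :
    (kerMat (pascalRec α β) n).det = (kerMat (bandKernel p q p' q' (diffSymbol α β)) n).det := by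
  rw [pascalRec_eq_conjKernel_diffSymbol h0, bandKernel,
    det_kerMat_conjKernel (fun _ _ => chooseKernel_of_lt) chooseKernel_self
      (fun _ _ => chooseKernel_of_lt) chooseKernel_self,
    det_kerMat_conjKernel (fun _ _ => recKernel_of_lt p q) (recKernel_self p q)
      (fun _ _ => recKernel_of_lt p' q') (recKernel_self p' q')]

end Band

end GeneralizedPascal

open GeneralizedPascal in
theorem stmt_11 {R : Type*} [CommRing R]
    (γ₀ α₁ β₁ A₁ A₂ B₁ B₂ : R) (α β : ℕ → R)
    (hα0 : α 0 = γ₀) (hα1 : α 1 = α₁)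
    (hαrec : ∀ k, α (k + 2) = A₁ * α (k + 1) + A₂ * α k)
    (hβ0 : β 0 = γ₀) (hβ1 : β 1 = β₁)
    (hβrec : ∀ k, β (k + 2) = B₁ * β (k + 1) + B₂ * β k)
    (d : ℕ → R)
    (hd : ∀ n, d n = (Matrix.of fun i j : Fin n => pascalRec α β i j).det)
    (D₁ D₂ : R)
    (hD1 : D₁ = -(A₁ * β₁ + B₁ * α₁ - 2 * (α₁ + β₁) +
        γ₀ * (A₁ * B₂ + A₂ * B₁ - (A₂ + B₂) + A₂ * B₂)))
    (hD2 : D₂ = -((A₂ * γ₀ + α₁ + (1 - A₁ - A₂) * β₁) *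
        (B₂ * γ₀ + β₁ + (1 - B₁ - B₂) * α₁))) :
    d 1 = γ₀ ∧ d 2 = γ₀ * (α₁ + β₁) - α₁ * β₁ ∧
      ∀ n, 3 ≤ n → d n = D₁ * d (n - 1) + D₂ * d (n - 2) := by
  refine ⟨?_, ?_, fun n hn => ?_⟩
  · simp [hd, pascalRec, hα0]
  · rw [hd, Matrix.det_fin_two]
    change pascalRec α β 0 0 * pascalRec α β 1 1 - pascalRec α β 0 1 * pascalRec α β 1 0 = _
    simp only [pascalRec, hα0, hα1, hβ1]
    ring
  obtain ⟨m, rfl⟩ : ∃ m, n = m + 3 := ⟨n - 3, by omega⟩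
  have h0 : α 0 = β 0 := hα0.trans hβ0.symm
  have hpos := diffSymbol_natCast_add_two (α := α) hβrec
  have hneg := diffSymbol_neg_natCast_add_two h0 hαrec
  have hdet : ∀ n, d n =
      (kerMat (bandKernel (A₁ - 2) (A₁ + A₂ - 1) (B₁ - 2) (B₁ + B₂ - 1) (diffSymbol α β)) n).det :=
    fun n => (hd n).trans (det_kerMat_pascalRec h0 _ _ _ _ n)
  have hα2 : α 2 = A₁ * α₁ + A₂ * γ₀ := by rw [← hα1, ← hα0]; exact hαrec 0
  have hβ2 : β 2 = B₁ * β₁ + B₂ * γ₀ := by rw [← hβ1, ← hβ0]; exact hβrec 0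
  rw [show m + 3 - 1 = m + 2 by omega, show m + 3 - 2 = m + 1 by omega, hdet, hdet, hdet,
    det_kerMat_add_two_of_tridiagonal _ (fun _ _ => bandKernel_eq_zero hpos hneg) (m + 1),
    bandKernel_add_two_add_two, bandKernel_add_one_add_two hpos, bandKernel_add_two_add_one hneg,
    diffSymbol_zero, diffSymbol_one, diffSymbol_two, diffSymbol_neg_one, diffSymbol_neg_two,
    hα0, hα1, hα2, hβ0, hβ1, hβ2, hD1, hD2]
  ring
end

section
/- The entries of the infinite antisymmetric generalized Pascal matrix P_{(0,1,1,1,…),−(0,1,1,1,…)} satisfy p_{i,j} = C(i+j−1, j) − C(i+j−1, j−1), where by convention C(−1,−1) = C(−1,0) = 1 and C(k,−1) = 0 for k ≥ 0. -/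
/-- Binomial coefficient on integer arguments with the conventions
`C(-1,-1) = C(-1,0) = 1` and `C(k,-1) = 0` for `k ≥ 0`. -/
def intChoose (a b : ℤ) : ℤ :=
  if a = -1 ∧ (b = -1 ∨ b = 0) then 1
  else if b = -1 then 0
  else if 0 ≤ a ∧ 0 ≤ b then (a.toNat.choose b.toNat : ℤ)
  else 0

/-! The right-hand side satisfies the boundary conditions and the Pascal recursion that define
`pascalRec`, and these determine the matrix. For the right-hand side the recursion is Pascal's
rule applied to both binomial coefficients; it also holds at the lower index `-1`. -/

theorem pascalRec_unique {R : Type*} [CommRing R] {α β : ℕ → R} (f : ℕ → ℕ → R)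
    (h_col : ∀ i, f i 0 = α i) (h_row : ∀ j, f 0 (j + 1) = β (j + 1))
    (h_rec : ∀ i j, f (i + 1) (j + 1) = f i (j + 1) + f (i + 1) j) :
    ∀ i j, pascalRec α β i j = f i j
  | i, 0 => by rw [pascalRec, h_col]
  | 0, j + 1 => by rw [pascalRec, h_row]
  | i + 1, j + 1 => by
    rw [pascalRec, h_rec, pascalRec_unique f h_col h_row h_rec i (j + 1),
      pascalRec_unique f h_col h_row h_rec (i + 1) j]

theorem intChoose_natCast (n k : ℕ) : intChoose n k = n.choose k := by
  simp only [intChoose]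
  rw [if_neg (by omega), if_neg (by omega), if_pos ⟨by omega, by omega⟩]
  simp

theorem intChoose_natCast_neg_one (n : ℕ) : intChoose n (-1) = 0 := by
  simp [intChoose]

theorem intChoose_succ_succ (n : ℕ) {k : ℤ} (hk : -1 ≤ k) :
    intChoose (n + 1) (k + 1) = intChoose n k + intChoose n (k + 1) := by
  rcases hk.eq_or_lt with rfl | hk
  · have h_succ := intChoose_natCast (n + 1) 0
    have h_zero := intChoose_natCast n 0
    simp_all [intChoose_natCast_neg_one]
  · lift k to ℕ using (by omega)
    have h_succ := intChoose_natCast (n + 1) (k + 1)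
    push_cast at h_succ
    rw [h_succ, intChoose_natCast, ← Nat.cast_add_one, intChoose_natCast, Nat.choose_succ_succ']
    push_cast
    ring

def binomDiff (i j : ℕ) : ℤ :=
  intChoose ((i : ℤ) + j - 1) j - intChoose ((i : ℤ) + j - 1) ((j : ℤ) - 1)

theorem binomDiff_zero_right (i : ℕ) : binomDiff i 0 = if i = 0 then 0 else 1 := by
  cases i with
  | zero => simp [binomDiff, intChoose]
  | succ i =>
    have h_zero := intChoose_natCast i 0
    simp_all [binomDiff, intChoose_natCast_neg_one]

theorem binomDiff_zero_succ (j : ℕ) : binomDiff 0 (j + 1) = -1 := by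
  have h_above := intChoose_natCast j (j + 1)
  have h_diag := intChoose_natCast j j
  simp_all [binomDiff]

theorem binomDiff_succ_succ (i j : ℕ) :
    binomDiff (i + 1) (j + 1) = binomDiff i (j + 1) + binomDiff (i + 1) j := by
  have h_top := intChoose_succ_succ (i + j) (k := j) (by omega)
  have h_bot := intChoose_succ_succ (i + j) (k := (j : ℤ) - 1) (by omega)
  rw [sub_add_cancel] at h_bot
  simp only [binomDiff]
  push_cast at *
  rw [show (i : ℤ) + 1 + (j + 1) - 1 = i + j + 1 by ring, show (i : ℤ) + (j + 1) - 1 = i + j by ring,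
    show (i : ℤ) + 1 + j - 1 = i + j by ring, add_sub_cancel_right, h_top, h_bot]
  ring

theorem stmt_15 (i j : ℕ) :
    pascalRec (fun k => if k = 0 then (0 : ℤ) else 1)
        (fun k => -(if k = 0 then (0 : ℤ) else 1)) i j =
      intChoose ((i : ℤ) + j - 1) j - intChoose ((i : ℤ) + j - 1) ((j : ℤ) - 1) :=
  pascalRec_unique binomDiff binomDiff_zero_right
    (fun j => by simp [binomDiff_zero_succ]) binomDiff_succ_succ i j
end

section
/- For the geometric sequence α = (0, 1, A, A², A³, …) (α_0 = 0, α_k = A^{k−1} for k ≥ 1), the symplectic matrix P_{α,−α}(2n) has determinant A^{2(n−1)} for all n ≥ 1. -/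
/-!
Let `ω` be the skew form on `ℕ →₀ R` whose Gram matrix `V` is tridiagonal with subdiagonal
`(1, A, A, …)`, and let `N` be the map `e₀ ↦ e₁ - e₀`, `e₁ ↦ (A - 1) e₁ + e₂`, `eₖ ↦ eₖ₊₁`
(`k ≥ 2`). Then `N` preserves `ω`, and since
`ω((1+N)x, (1+N)y) - ω(x, (1+N)y) - ω((1+N)x, y) = ω(Nx, Ny) - ω(x, y)`, the Gram array
`ω(vᵢ, vⱼ)` of the vectors `vᵢ = (1 + N)ⁱ e₀` satisfies the Pascal rule; its first column is `α`, so it is `P_{α,-α}`.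
As `vᵢ = eᵢ + (lower terms)`, this gives `P = F V Fᵀ` with `F` unitriangular, hence
`det P = det V = 1² · A² ⋯ A² = A^{2(n-1)}`.
-/

open Finsupp
open scoped Matrix

section PascalFactorization

variable {R : Type*} [CommRing R]

theorem eq_pascalRec {α β : ℕ → R} {g : ℕ → ℕ → R} (hcol : ∀ i, g i 0 = α i)
    (hrow : ∀ j, g 0 (j + 1) = β (j + 1))
    (hrec : ∀ i j, g (i + 1) (j + 1) = g i (j + 1) + g (i + 1) j) :
    ∀ i j, g i j = pascalRec α β i j
  | i, 0 => by rw [hcol, pascalRec]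
  | 0, j + 1 => by rw [hrow, pascalRec]
  | i + 1, j + 1 => by
    rw [hrec, pascalRec, eq_pascalRec hcol hrow hrec i (j + 1),
      eq_pascalRec hcol hrow hrec (i + 1) j]

theorem LinearMap.BilinForm.apply_one_add_pow_succ_succ {M : Type*} [AddCommGroup M]
    [Module R M] (B : LinearMap.BilinForm R M) (N : Module.End R M)
    (hN : ∀ x y, B (N x) (N y) = B x y) (v : M) (i j : ℕ) :
    B (((1 + N) ^ (i + 1)) v) (((1 + N) ^ (j + 1)) v)
      = B (((1 + N) ^ i) v) (((1 + N) ^ (j + 1)) v)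
        + B (((1 + N) ^ (i + 1)) v) (((1 + N) ^ j) v) := by
  simp only [pow_succ', Module.End.mul_apply, LinearMap.add_apply, Module.End.one_apply, map_add]
  linear_combination hN (((1 + N) ^ i) v) (((1 + N) ^ j) v)

def skewTridiag (b : ℕ → R) (k l : ℕ) : R :=
  if k = l + 1 then b l else if l = k + 1 then -b k else 0

theorem skewTridiag_add_two (b : ℕ → R) (k l : ℕ) :
    skewTridiag b (k + 2) (l + 2) = skewTridiag (fun t => b (t + 2)) k l := by
  simp [skewTridiag]

noncomputable def skewTridiagForm (b : ℕ → R) : LinearMap.BilinForm R (ℕ →₀ R) :=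
  linearCombination R fun k => linearCombination R fun l => skewTridiag b k l

theorem skewTridiagForm_single (b : ℕ → R) (k l : ℕ) (c d : R) :
    skewTridiagForm b (single k c) (single l d) = c * d * skewTridiag b k l := by
  simp [skewTridiagForm, mul_assoc]

theorem skewTridiagForm_swap (b : ℕ → R) (x y : ℕ →₀ R) :
    skewTridiagForm b x y = -skewTridiagForm b y x := by
  suffices skewTridiagForm b = -(skewTridiagForm b).flip from congrArg (· x y) this
  refine LinearMap.ext_basis Finsupp.basisSingleOne Finsupp.basisSingleOne fun k l => ?_
  simp [skewTridiagForm_single]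
  unfold skewTridiag
  split_ifs <;> first | omega | ring

theorem skewTridiagForm_single_zero_right (b : ℕ → R) (x : ℕ →₀ R) :
    skewTridiagForm b x (single 0 1) = x 1 * b 0 := by
  induction x using Finsupp.induction_linear with
  | zero => simp
  | add x y hx hy => simp [hx, hy]; ring
  | single k c => simp [skewTridiagForm_single, skewTridiag, single_apply]

theorem skewTridiagForm_eq_sum (b : ℕ → R) {x y : ℕ →₀ R} {s : Finset ℕ}
    (hx : x ∈ supported R R s) (hy : y ∈ supported R R s) :
    skewTridiagForm b x y = ∑ k ∈ s, ∑ l ∈ s, x k * skewTridiag b k l * y l := by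
  rw [skewTridiagForm, linearCombination_apply_of_mem_supported R hx]
  simp only [LinearMap.sum_apply, LinearMap.smul_apply,
    linearCombination_apply_of_mem_supported R hy, smul_eq_mul, Finset.mul_sum]
  exact Finset.sum_congr rfl fun k _ => Finset.sum_congr rfl fun l _ => by ring

def skewTridiagMatrix (b : ℕ → R) (m : ℕ) : Matrix (Fin m) (Fin m) R :=
  Matrix.of fun k l => skewTridiag b k l

theorem det_skewTridiagMatrix_add_two (b : ℕ → R) (m : ℕ) :
    (skewTridiagMatrix b (m + 2)).det
      = b 0 ^ 2 * (skewTridiagMatrix (fun t => b (t + 2)) m).det := by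
  rw [Matrix.det_succ_column_zero, Finset.sum_eq_single 1]
  · rw [Matrix.det_succ_row_zero, Finset.sum_eq_single 0]
    · have hminor : ((skewTridiagMatrix b (m + 2)).submatrix (Fin.succAbove 1) Fin.succ).submatrix
          Fin.succ (Fin.succAbove 0) = skewTridiagMatrix (fun t => b (t + 2)) m := by
        ext k l
        simp [skewTridiagMatrix, Fin.succAbove, Fin.lt_def, skewTridiag_add_two]
      rw [hminor]
      simp [skewTridiagMatrix, skewTridiag]
      ring
    · intro j _ hj
      simp [skewTridiagMatrix, skewTridiag, hj]
    · simp
  · intro i _ hi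
    have hi' : (i : ℕ) ≠ 1 := fun h => hi (Fin.ext (by simpa using h))
    simp [skewTridiagMatrix, skewTridiag, hi']
  · simp

theorem det_skewTridiagMatrix_two_mul (b : ℕ → R) (n : ℕ) :
    (skewTridiagMatrix b (2 * n)).det = ∏ k ∈ Finset.range n, b (2 * k) ^ 2 := by
  induction n generalizing b with
  | zero => simp [skewTridiagMatrix]
  | succ n ih =>
    rw [show 2 * (n + 1) = 2 * n + 2 from rfl, det_skewTridiagMatrix_add_two, ih,
      Finset.prod_range_succ', mul_comm]
    simp only [mul_add, mul_zero, mul_one]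

def geomWeight (A : R) (k : ℕ) : R := if k = 0 then 1 else A

theorem prod_geomWeight_two_mul (A : R) (n : ℕ) :
    ∏ k ∈ Finset.range n, geomWeight A (2 * k) ^ 2 = A ^ (2 * (n - 1)) := by
  rcases n with _ | n
  · simp
  · simp [Finset.prod_range_succ', geomWeight]
    ring

noncomputable def twistedShift (A : R) : Module.End R (ℕ →₀ R) :=
  linearCombination R fun
    | 0 => single 1 1 - single 0 1
    | 1 => single 1 (A - 1) + single 2 1
    | k + 2 => single (k + 3) 1

theorem skewTridiagForm_twistedShift (A : R) (x y : ℕ →₀ R) :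
    skewTridiagForm (geomWeight A) (twistedShift A x) (twistedShift A y)
      = skewTridiagForm (geomWeight A) x y := by
  suffices (skewTridiagForm (geomWeight A)).compl₁₂ (twistedShift A) (twistedShift A)
      = skewTridiagForm (geomWeight A) from congrArg (· x y) this
  refine LinearMap.ext_basis Finsupp.basisSingleOne Finsupp.basisSingleOne fun k l => ?_
  rcases k with _ | _ | k <;> rcases l with _ | _ | l <;>
    simp [twistedShift, skewTridiagForm_single, skewTridiag, geomWeight]

theorem twistedShift_apply_zero (A : R) (x : ℕ →₀ R) : twistedShift A x 0 = -x 0 := by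
  induction x using Finsupp.induction_linear with
  | zero => simp
  | add x y hx hy => simp [hx, hy]; ring
  | single k c => rcases k with _ | _ | k <;> simp [twistedShift]

theorem twistedShift_apply_one (A : R) (x : ℕ →₀ R) :
    twistedShift A x 1 = x 0 + (A - 1) * x 1 := by
  induction x using Finsupp.induction_linear with
  | zero => simp
  | add x y hx hy => simp [hx, hy]; ring
  | single k c => rcases k with _ | _ | k <;> simp [twistedShift, mul_comm]

theorem twistedShift_apply_add_two (A : R) (x : ℕ →₀ R) (k : ℕ) :
    twistedShift A x (k + 2) = x (k + 1) := by
  induction x using Finsupp.induction_linear with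
  | zero => simp
  | add x y hx hy => simp [hx, hy]
  | single l c => rcases l with _ | _ | l <;> simp [twistedShift, single_apply]

noncomputable def rowVec (A : R) (i : ℕ) : ℕ →₀ R :=
  ((1 + twistedShift A) ^ i) (single 0 1)

theorem rowVec_succ (A : R) (i : ℕ) :
    rowVec A (i + 1) = rowVec A i + twistedShift A (rowVec A i) := by
  rw [rowVec, pow_succ', Module.End.mul_apply, LinearMap.add_apply, Module.End.one_apply, rowVec]

theorem rowVec_succ_apply_zero (A : R) (i : ℕ) : rowVec A (i + 1) 0 = 0 := by
  simp [rowVec_succ, twistedShift_apply_zero]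

theorem rowVec_succ_apply_one (A : R) (i : ℕ) : rowVec A (i + 1) 1 = A ^ i := by
  induction i with
  | zero => simp [rowVec, twistedShift_apply_one]
  | succ i ih =>
    rw [rowVec_succ, Finsupp.add_apply, twistedShift_apply_one, rowVec_succ_apply_zero, ih]
    ring

theorem rowVec_apply_of_lt (A : R) {i k : ℕ} (h : i < k) : rowVec A i k = 0 := by
  induction i generalizing k with
  | zero => simp [rowVec, h.ne]
  | succ i ih =>
    obtain ⟨k, rfl⟩ : ∃ k', k = k' + 2 := ⟨k - 2, by omega⟩
    rw [rowVec_succ, Finsupp.add_apply, twistedShift_apply_add_two, ih (by omega),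
      ih (by omega), add_zero]

theorem rowVec_apply_self (A : R) : ∀ i, rowVec A i i = 1
  | 0 | 1 => by simp [rowVec, twistedShift_apply_one]
  | i + 2 => by
    rw [rowVec_succ, Finsupp.add_apply, twistedShift_apply_add_two,
      rowVec_apply_of_lt A (by omega), rowVec_apply_self A (i + 1), zero_add]

theorem rowVec_mem_supported (A : R) {i m : ℕ} (h : i < m) :
    rowVec A i ∈ supported R R (Finset.range m : Set ℕ) := by
  rw [mem_supported]
  intro k hk
  by_contra hkm
  simp only [Finset.coe_range, Set.mem_Iio, not_lt] at hkm
  exact mem_support_iff.mp hk (rowVec_apply_of_lt A (by omega))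

noncomputable def rowMatrix (A : R) (m : ℕ) : Matrix (Fin m) (Fin m) R :=
  Matrix.of fun i k => rowVec A i k

theorem det_rowMatrix (A : R) (m : ℕ) : (rowMatrix A m).det = 1 := by
  rw [Matrix.det_of_isLowerTriangular (rowMatrix A m) fun i k h =>
    rowVec_apply_of_lt A (by simpa using h)]
  exact Finset.prod_eq_one fun i _ => rowVec_apply_self A i

theorem skewTridiagForm_rowVec_eq_mul (A : R) (b : ℕ → R) {m : ℕ} (i j : Fin m) :
    skewTridiagForm b (rowVec A i) (rowVec A j)
      = (rowMatrix A m * skewTridiagMatrix b m * (rowMatrix A m)ᵀ) i j := by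
  rw [skewTridiagForm_eq_sum b (rowVec_mem_supported A i.isLt) (rowVec_mem_supported A j.isLt),
    Finset.sum_comm]
  simp only [Matrix.mul_apply, Finset.sum_mul, rowMatrix, skewTridiagMatrix, Matrix.of_apply,
    Matrix.transpose_apply, Finset.sum_range]

theorem rowVec_apply_one (A : R) {α : ℕ → R} (hα0 : α 0 = 0) (hα : ∀ k, α (k + 1) = A ^ k) :
    ∀ i, rowVec A i 1 = α i
  | 0 => by simp [rowVec, hα0]
  | i + 1 => by rw [rowVec_succ_apply_one, hα]

theorem pascalRec_eq_skewTridiagForm (A : R) {α : ℕ → R} (hα0 : α 0 = 0)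
    (hα : ∀ k, α (k + 1) = A ^ k) (i j : ℕ) :
    pascalRec α (fun k => -α k) i j
      = skewTridiagForm (geomWeight A) (rowVec A i) (rowVec A j) := by
  have hcol (i : ℕ) : skewTridiagForm (geomWeight A) (rowVec A i) (rowVec A 0) = α i := by
    simp [rowVec, skewTridiagForm_single_zero_right, geomWeight, ← rowVec_apply_one A hα0 hα]
  refine (eq_pascalRec
    (g := fun i j => skewTridiagForm (geomWeight A) (rowVec A i) (rowVec A j))
    hcol (fun j => ?_) (fun i j => ?_) i j).symm
  · rw [skewTridiagForm_swap, hcol]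
  · exact LinearMap.BilinForm.apply_one_add_pow_succ_succ _ _
      (skewTridiagForm_twistedShift A) _ i j

end PascalFactorization

theorem stmt_16_general {R : Type*} [CommRing R] (A : R) (n : ℕ)
    (α : ℕ → R) (hα0 : α 0 = 0) (hα : ∀ k, α (k + 1) = A ^ k) :
    (Matrix.of fun i j : Fin (2 * n) =>
      pascalRec α (fun k => -α k) i j).det = A ^ (2 * (n - 1)) := by
  have hfactor : (Matrix.of fun i j : Fin (2 * n) => pascalRec α (fun k => -α k) i j)
      = rowMatrix A (2 * n) * skewTridiagMatrix (geomWeight A) (2 * n)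
          * (rowMatrix A (2 * n))ᵀ := by
    ext i j
    rw [Matrix.of_apply, pascalRec_eq_skewTridiagForm A hα0 hα, skewTridiagForm_rowVec_eq_mul]
  rw [hfactor, Matrix.det_mul, Matrix.det_mul, Matrix.det_transpose, det_rowMatrix,
    det_skewTridiagMatrix_two_mul, prod_geomWeight_two_mul, one_mul, mul_one]

theorem stmt_16 {R : Type*} [CommRing R] (A : R) (n : ℕ) (hn : 1 ≤ n)
    (α : ℕ → R) (hα0 : α 0 = 0) (hα : ∀ k, α (k + 1) = A ^ k) :
    (Matrix.of fun i j : Fin (2 * n) =>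
      pascalRec α (fun k => -α k) i j).det = A ^ (2 * (n - 1)) :=
  stmt_16_general A n α hα0 hα
end

section
/- Let M_a(n) be the n×n matrix with entries a^{|i−j|} for 0 ≤ i,j < n. Then det(M_a(n)) = (1 − a²)^{n−1} for n ≥ 1. -/
/-!
Subtracting `a` times row `i` from row `i + 1`, for every `i`, leaves the determinant unchanged
and makes the matrix upper triangular: the first row stays `(1, a, a², …)`, and in row `i + 1`
the entries left of the diagonal cancel, `a ^ (i + 1 - j) - a * a ^ (i - j) = 0`, while the
diagonal entry becomes `1 - a * a`. Hence the determinant is `(1 - a²) ^ (n - 1)`.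
-/

namespace Matrix

variable {R : Type*} [CommRing R]

/-- The Kac–Murdock–Szegő matrix `M_a(n)`. -/
def kacMurdockSzego (a : R) (n : ℕ) : Matrix (Fin n) (Fin n) R :=
  of fun i j => a ^ ((i : ℤ) - (j : ℤ)).natAbs

/-- `kacMurdockSzego a (n + 1)` after the row operations `row (i + 1) -= a • row i`. -/
def kacMurdockSzegoReduced (a : R) (n : ℕ) : Matrix (Fin (n + 1)) (Fin (n + 1)) R :=
  of fun i j => if i = 0 then a ^ (j : ℕ) else if j < i then 0 else a ^ ((j : ℕ) - i) * (1 - a ^ 2)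

theorem isUpperTriangular_kacMurdockSzegoReduced (a : R) (n : ℕ) :
    (kacMurdockSzegoReduced a n).IsUpperTriangular := by
  intro i j hji
  have hi : i ≠ 0 := by rintro rfl; exact Fin.not_lt_zero _ hji
  simp [kacMurdockSzegoReduced, hi, show j < i from hji]

theorem det_kacMurdockSzegoReduced (a : R) (n : ℕ) :
    (kacMurdockSzegoReduced a n).det = (1 - a ^ 2) ^ n := by
  rw [det_of_isUpperTriangular (isUpperTriangular_kacMurdockSzegoReduced a n),
    Fin.prod_univ_succ]
  simp [kacMurdockSzegoReduced, Fin.succ_ne_zero]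

theorem kacMurdockSzego_zero_row (a : R) (n : ℕ) (j : Fin (n + 1)) :
    kacMurdockSzego a (n + 1) 0 j = kacMurdockSzegoReduced a n 0 j := by
  simp [kacMurdockSzego, kacMurdockSzegoReduced]

theorem kacMurdockSzego_succ_row (a : R) (n : ℕ) (i : Fin n) (j : Fin (n + 1)) :
    kacMurdockSzego a (n + 1) i.succ j =
      kacMurdockSzegoReduced a n i.succ j + a * kacMurdockSzego a (n + 1) i.castSucc j := by
  simp only [kacMurdockSzego, kacMurdockSzegoReduced, of_apply, Fin.succ_ne_zero, if_false,
    Fin.lt_def, Fin.val_succ, Fin.val_castSucc, Nat.cast_add, Nat.cast_one]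
  split_ifs with hji
  · rw [show ((i : ℤ) + 1 - j).natAbs = ((i : ℤ) - j).natAbs + 1 by omega, pow_succ]
    ring
  · rw [show ((i : ℤ) + 1 - j).natAbs = (j : ℕ) - (i + 1) by omega,
      show ((i : ℤ) - j).natAbs = (j : ℕ) - (i + 1) + 1 by omega, pow_succ]
    ring

theorem det_kacMurdockSzego (a : R) (n : ℕ) :
    (kacMurdockSzego a n).det = (1 - a ^ 2) ^ (n - 1) := by
  cases n with
  | zero => simp
  | succ n =>
    rw [det_eq_of_forall_row_eq_smul_add_pred (fun _ => a) (kacMurdockSzego_zero_row a n)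
      (kacMurdockSzego_succ_row a n), det_kacMurdockSzegoReduced, Nat.add_sub_cancel]

end Matrix

theorem stmt_17_general {R : Type*} [CommRing R] (a : R) (n : ℕ) :
    (Matrix.of fun i j : Fin n =>
      a ^ (((i : ℤ) - (j : ℤ)).natAbs)).det = (1 - a ^ 2) ^ (n - 1) :=
  Matrix.det_kacMurdockSzego a n

theorem stmt_17 {R : Type*} [CommRing R] (a : R) (n : ℕ) (hn : 1 ≤ n) :
    (Matrix.of fun i j : Fin n =>
      a ^ (((i : ℤ) - (j : ℤ)).natAbs)).det = (1 - a ^ 2) ^ (n - 1) :=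
  stmt_17_general a n
end

section
/- Let D(n) be the n×n matrix with entries d_{i,j} = x^{min(i,j)}·(1+x)^{|i−j|} for 0 ≤ i,j < n. Then det(D(n)) = (−1−x−x²)^{n−1} · x^{C(n−1,2)} for n ≥ 1. -/
/-!
For any `y`, the entries `d a b = x ^ min a b * y ^ |a - b|` satisfy `d (a+1) b = y * d a b` for
`b ≤ a`, while for `b > a` the difference `d (a+1) b - y * d a b` is
`x ^ a * y ^ (b - a - 1) * (x - y ^ 2)`. So subtracting `y` times each row from the next one
leaves an upper triangular matrix with diagonal `1, x - y², x (x - y²), x² (x - y²), …`,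
and for `y = 1 + x` we have `x - y² = -1 - x - x²`.
-/

open Finset

section MinPow

variable {R : Type*} [CommRing R] (x y : R)

def minPowEntry (a b : ℕ) : R := x ^ min a b * y ^ ((a : ℤ) - b).natAbs

/-- The entries left after subtracting `y` times row `a` from row `a + 1`. -/
def minPowReduced : ℕ → ℕ → R
  | 0, b => y ^ b
  | a + 1, b => if b ≤ a then 0 else x ^ a * y ^ (b - (a + 1)) * (x - y ^ 2)

theorem minPowEntry_zero_left (b : ℕ) : minPowEntry x y 0 b = minPowReduced x y 0 b := by
  simp [minPowEntry, minPowReduced]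

theorem minPowEntry_succ_left (a b : ℕ) :
    minPowEntry x y (a + 1) b = minPowReduced x y (a + 1) b + y * minPowEntry x y a b := by
  simp only [minPowEntry, minPowReduced]
  split_ifs with hba
  · rw [min_eq_right (by omega), min_eq_right hba,
      show ((a + 1 : ℕ) - b : ℤ).natAbs = (((a : ℤ) - b).natAbs) + 1 by omega]
    ring
  · obtain ⟨k, rfl⟩ : ∃ k, b = a + 1 + k := ⟨b - (a + 1), by omega⟩
    rw [min_eq_left (by omega), min_eq_left (by omega),
      show ((a + 1 : ℕ) - (a + 1 + k : ℕ) : ℤ).natAbs = k by omega,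
      show ((a : ℤ) - (a + 1 + k : ℕ)).natAbs = k + 1 by omega, Nat.add_sub_cancel_left]
    ring

theorem minPowReduced_eq_zero_of_lt {a b : ℕ} (h : b < a) : minPowReduced x y a b = 0 := by
  obtain ⟨a, rfl⟩ : ∃ a', a = a' + 1 := ⟨a - 1, by omega⟩
  exact if_pos (by omega)

theorem prod_range_minPowReduced_diag (m : ℕ) :
    ∏ a ∈ range (m + 1), minPowReduced x y a a = (x - y ^ 2) ^ m * x ^ m.choose 2 := by
  have hdiag (a : ℕ) : minPowReduced x y (a + 1) (a + 1) = x ^ a * (x - y ^ 2) := by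
    simp [minPowReduced]
  rw [prod_range_succ', prod_congr rfl fun a _ => hdiag a, prod_mul_distrib,
    prod_pow_eq_pow_sum, sum_range_id, ← Nat.choose_two_right, prod_const, card_range]
  simp [minPowReduced, mul_comm]

theorem det_minPowEntry (n : ℕ) :
    (Matrix.of fun i j : Fin n => minPowEntry x y i j).det =
      (x - y ^ 2) ^ (n - 1) * x ^ (n - 1).choose 2 := by
  cases n with
  | zero => simp
  | succ m =>
    have hreduce : (Matrix.of fun i j : Fin (m + 1) => minPowEntry x y i j).det =
        (Matrix.of fun i j : Fin (m + 1) => minPowReduced x y i j).det :=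
      Matrix.det_eq_of_forall_row_eq_smul_add_pred (fun _ => y)
        (fun j => minPowEntry_zero_left x y j) (fun i j => minPowEntry_succ_left x y i j)
    have hupper : (Matrix.of fun i j : Fin (m + 1) => minPowReduced x y i j).IsUpperTriangular :=
      fun _ _ hji => minPowReduced_eq_zero_of_lt x y hji
    rw [hreduce, Matrix.det_of_isUpperTriangular hupper]
    simpa [Fin.prod_univ_eq_prod_range (fun a => minPowReduced x y a a)] using
      prod_range_minPowReduced_diag x y m

end MinPow

theorem stmt_18_general {R : Type*} [CommRing R] (x : R) (n : ℕ) :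
    (Matrix.of fun i j : Fin n =>
      x ^ (min (i : ℕ) (j : ℕ)) * (1 + x) ^ (((i : ℤ) - (j : ℤ)).natAbs)).det =
    (-1 - x - x ^ 2) ^ (n - 1) * x ^ ((n - 1).choose 2) := by
  rw [show -1 - x - x ^ 2 = x - (1 + x) ^ 2 by ring]
  exact det_minPowEntry x (1 + x) n

theorem stmt_18 {R : Type*} [CommRing R] (x : R) (n : ℕ) (hn : 1 ≤ n) :
    (Matrix.of fun i j : Fin n =>
      x ^ (min (i : ℕ) (j : ℕ)) * (1 + x) ^ (((i : ℤ) - (j : ℤ)).natAbs)).det =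
    (-1 - x - x ^ 2) ^ (n - 1) * x ^ ((n - 1).choose 2) :=
  stmt_18_general x n
end

section
/- Let D(n) be the n×n matrix with entries d_{i,j} = x^{min(i,j)}·(x−1)^{|i−j|} for 0 ≤ i,j < n. Then det(D(n)) = (−x²+3x−1)^{n−1} · x^{C(n−1,2)} for n ≥ 1. -/
/-!
Subtracting `(x - 1)` times row `i` from row `i + 1`, for every `i`, leaves the determinant
unchanged and makes the matrix upper triangular: below the diagonal the two rows are
proportional, and on and above it the difference is `c * x ^ i * (x - 1) ^ (j - i - 1)` with
`c = x - (x - 1) ^ 2 = -x ^ 2 + 3 * x - 1`. The diagonal is then `1, c, c x, …, c x ^ (n - 2)`.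
-/

open Matrix

namespace MinPowMatrix

variable {R : Type*} [CommRing R]

def entry (x : R) (i j : ℕ) : R :=
  x ^ min i j * (x - 1) ^ ((i : ℤ) - j).natAbs

theorem entry_zero_left (x : R) (j : ℕ) : entry x 0 j = (x - 1) ^ j := by
  simp [entry]

theorem entry_succ_left (x : R) (i j : ℕ) :
    entry x (i + 1) j =
      (if j ≤ i then 0 else (-x ^ 2 + 3 * x - 1) * x ^ i * (x - 1) ^ (j - (i + 1))) +
        (x - 1) * entry x i j := by
  unfold entry
  split_ifs with hji
  · rw [min_eq_right (by omega), min_eq_right hji,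
      show ((i + 1 : ℕ) - (j : ℤ)).natAbs = (i - (j : ℤ)).natAbs + 1 by omega, pow_succ]
    ring
  · rw [min_eq_left (by omega), min_eq_left (by omega),
      show ((i + 1 : ℕ) - (j : ℤ)).natAbs = j - (i + 1) by omega,
      show (i - (j : ℤ)).natAbs = j - (i + 1) + 1 by omega, pow_succ, pow_succ]
    ring

def reduced (x : R) (m : ℕ) : Matrix (Fin (m + 1)) (Fin (m + 1)) R :=
  Matrix.of fun i j => Fin.cases (motive := fun _ => R) ((x - 1) ^ (j : ℕ))
    (fun k => if (j : ℕ) ≤ k then 0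
      else (-x ^ 2 + 3 * x - 1) * x ^ (k : ℕ) * (x - 1) ^ ((j : ℕ) - (k + 1))) i

theorem det_eq_det_reduced (x : R) (m : ℕ) :
    (Matrix.of fun i j : Fin (m + 1) => entry x i j).det = (reduced x m).det :=
  det_eq_of_forall_row_eq_smul_add_pred (fun _ => x - 1)
    (fun j => by simp [reduced, entry_zero_left])
    (fun i j => by simp [reduced, entry_succ_left])

theorem reduced_isUpperTriangular (x : R) (m : ℕ) : (reduced x m).IsUpperTriangular := by
  intro i j hji
  induction i using Fin.cases with
  | zero => exact absurd hji (Fin.not_lt_zero j)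
  | succ k =>
    have : (j : ℕ) ≤ k := by simpa [Fin.lt_def, Nat.lt_succ_iff] using hji
    simp [reduced, this]

theorem det_reduced (x : R) (m : ℕ) :
    (reduced x m).det = (-x ^ 2 + 3 * x - 1) ^ m * x ^ m.choose 2 := by
  rw [det_of_isUpperTriangular (reduced_isUpperTriangular x m), Fin.prod_univ_succ]
  simp only [reduced, of_apply, Fin.cases_zero, Fin.cases_succ, Fin.val_zero, Fin.val_succ,
    pow_zero, one_mul, add_le_iff_nonpos_right, Nat.le_zero, one_ne_zero, if_false,
    Nat.sub_self, mul_one]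
  rw [Finset.prod_mul_distrib, Finset.prod_const, Finset.card_univ, Fintype.card_fin,
    Finset.prod_pow_eq_pow_sum, Fin.sum_univ_eq_sum_range (fun i => i), Finset.sum_range_id,
    Nat.choose_two_right]

end MinPowMatrix

theorem stmt_19 {R : Type*} [CommRing R] (x : R) (n : ℕ) (hn : 1 ≤ n) :
    (Matrix.of fun i j : Fin n =>
      x ^ (min (i : ℕ) (j : ℕ)) * (x - 1) ^ (((i : ℤ) - (j : ℤ)).natAbs)).det =
    (-x ^ 2 + 3 * x - 1) ^ (n - 1) * x ^ ((n - 1).choose 2) := by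
  obtain ⟨m, rfl⟩ : ∃ m, n = m + 1 := ⟨n - 1, by omega⟩
  exact (MinPowMatrix.det_eq_det_reduced x m).trans (MinPowMatrix.det_reduced x m)
end
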